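/- arXiv:1804.06444 — 2 statements merged into one kernel-verified Lean document; each statement's English description precedes it below -/
import Mathlib

section
/- For every 1 < p < ∞ and every R > 0, the measure 𝒱(B_R) = ∫_{B_R} ‖∇₀ψ‖^p dL_{2n+1} satisfies the global Ahlfors Q-regularity identity 𝒱(B_R) = σ_p R^Q, where Q = 2n + 2k and σ_p = 𝒱(B_1). -/
/-!
For the anisotropic dilations `δ_R (x', t) = (a + R (x' - a), s + R^{2k} (t - s))` one has
`Σ ∘ δ_R = R² Σ`, `h ∘ δ_R = R^{4k} h` and hence `ψ ∘ δ_R = R ψ`. Under `δ_R` the derivative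
`∂/∂x_l` scales by `R`, `∂/∂t` by `R^{2k}`, and the coefficient `(x_{l±n} - a_{l±n}) Σ^{k-1}` by
`R^{2k-1}`, so each `X_l` lowers the degree of homogeneity by one and `‖∇₀ψ‖ ∘ δ_R = ‖∇₀ψ‖`.
Since `δ_R` maps `B_1` onto `B_R` and has Jacobian `R^Q`, the identity is the change of variables
formula. Because `δ_R` is an invertible affine map, the chain rule for `fderiv` holds with no
differentiability assumption (both sides vanish where `ψ` is not differentiable), so no
regularity of `ψ` is ever needed.
-/

open MeasureTheory Real Filter

noncomputable section

/-- Points of `ℝ^{2n+1}`: the `2n` horizontal coordinates indexed by `Fin n ⊕ Fin n`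
(`Sum.inl i` encodes the coordinate `x_i` for `1 ≤ i ≤ n`, and `Sum.inr i` encodes the
coordinate `x_{i+n}`), together with the vertical coordinate `t`. -/
abbrev Pt (n : ℕ) := ((Fin n ⊕ Fin n) → ℝ) × ℝ

/-- `Σ(x) = ∑_{l=1}^{2n} (x_l - a_l)²`. -/
def Sg (n : ℕ) (a : Fin n ⊕ Fin n → ℝ) (x : Pt n) : ℝ :=
  ∑ l : Fin n ⊕ Fin n, (x.1 l - a l) ^ 2

/-- Partial derivative `∂u/∂x_l` in the `l`-th horizontal coordinate direction. -/
def pdx (n : ℕ) (l : Fin n ⊕ Fin n) (u : Pt n → ℝ) (x : Pt n) : ℝ :=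
  fderiv ℝ u x (Pi.single l 1, 0)

/-- Partial derivative `∂u/∂t` in the vertical direction. -/
def pdt (n : ℕ) (u : Pt n → ℝ) (x : Pt n) : ℝ :=
  fderiv ℝ u x (0, 1)

/-- The Hörmander vector fields:
`X_i u = ∂u/∂x_i + 2kc (x_{i+n} - a_{i+n}) Σ^{k-1} ∂u/∂t` for `1 ≤ i ≤ n`, and
`X_j u = ∂u/∂x_j - 2kc (x_{j-n} - a_{j-n}) Σ^{k-1} ∂u/∂t` for `n+1 ≤ j ≤ 2n`. -/
def X (n : ℕ) (k c : ℝ) (a : Fin n ⊕ Fin n → ℝ) (l : Fin n ⊕ Fin n)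
    (u : Pt n → ℝ) (x : Pt n) : ℝ :=
  match l with
  | Sum.inl i => pdx n (Sum.inl i) u x
      + 2 * k * c * (x.1 (Sum.inr i) - a (Sum.inr i)) * Sg n a x ^ (k - 1) * pdt n u x
  | Sum.inr j => pdx n (Sum.inr j) u x
      - 2 * k * c * (x.1 (Sum.inl j) - a (Sum.inl j)) * Sg n a x ^ (k - 1) * pdt n u x

/-- Norm of the horizontal gradient `∇₀u = (X₁u, …, X_{2n}u)`. -/
def hnorm (n : ℕ) (k c : ℝ) (a : Fin n ⊕ Fin n → ℝ) (u : Pt n → ℝ) (x : Pt n) : ℝ :=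
  Real.sqrt (∑ l : Fin n ⊕ Fin n, (X n k c a l u x) ^ 2)

/-- The `p`-Laplacian `Δ_p u = ∑_{l=1}^{2n} X_l (‖∇₀u‖^{p-2} X_l u)`. -/
def pLap (n : ℕ) (k c : ℝ) (a : Fin n ⊕ Fin n → ℝ) (p : ℝ) (u : Pt n → ℝ) (x : Pt n) : ℝ :=
  ∑ l : Fin n ⊕ Fin n,
    X n k c a l (fun y => hnorm n k c a u y ^ (p - 2) * X n k c a l u y) x

/-- `h(x) = c² Σ(x)^{2k} + (t-s)²`. -/
def hfun (n : ℕ) (k c : ℝ) (a : Fin n ⊕ Fin n → ℝ) (s : ℝ) (x : Pt n) : ℝ :=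
  c ^ 2 * Sg n a x ^ (2 * k) + (x.2 - s) ^ 2

/-- `ψ = h^{1/(4k)}`. -/
def psi (n : ℕ) (k c : ℝ) (a : Fin n ⊕ Fin n → ℝ) (s : ℝ) (x : Pt n) : ℝ :=
  hfun n k c a s x ^ (1 / (4 * k))

section AffineChangeOfVariables

variable {E : Type*} [NormedAddCommGroup E] [NormedSpace ℝ E] [FiniteDimensional ℝ E]

theorem fderiv_comp_affine_linearMap {G : Type*} [NormedAddCommGroup G] [NormedSpace ℝ G]
    {f : E →ₗ[ℝ] E} (hf : LinearMap.det f ≠ 0) (b : E) (u : E → G) (x : E) :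
    fderiv ℝ (fun y => u (b + f (y - b))) x
      = (fderiv ℝ u (b + f (x - b))).comp (LinearMap.toContinuousLinearMap f) := by
  let e := (f.equivOfDetNeZero hf).toContinuousLinearEquiv
  rw [fderiv_comp_sub (f := fun y => u (b + f y)) b,
    show (fun y => u (b + f y)) = (fun z => u (b + z)) ∘ e from rfl, e.comp_right_fderiv,
    fderiv_comp_add_left]
  rfl

variable [MeasurableSpace E] [BorelSpace E] (μ : Measure E) [μ.IsAddHaarMeasure]
  {F : Type*} [NormedAddCommGroup F] [NormedSpace ℝ F]

theorem integral_comp_linearMap {f : E →ₗ[ℝ] E} (hf : LinearMap.det f ≠ 0) (g : E → F) :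
    ∫ x, g (f x) ∂μ = |(LinearMap.det f)⁻¹| • ∫ x, g x ∂μ :=
  calc ∫ x, g (f x) ∂μ = ∫ y, g y ∂μ.map f := (integral_map_equiv
          (f.equivOfDetNeZero hf).toContinuousLinearEquiv.toHomeomorph.toMeasurableEquiv g).symm
    _ = _ := by
      rw [Measure.map_linearMap_addHaar_eq_smul_addHaar μ hf, integral_smul_measure,
        ENNReal.toReal_ofReal (abs_nonneg _)]

theorem integral_comp_affine_linearMap {f : E →ₗ[ℝ] E} (hf : LinearMap.det f ≠ 0) (b : E)
    (g : E → F) : ∫ x, g (b + f (x - b)) ∂μ = |(LinearMap.det f)⁻¹| • ∫ x, g x ∂μ := by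
  rw [integral_sub_right_eq_self (fun x => g (b + f x)),
    integral_comp_linearMap μ hf (fun y => g (b + y)), integral_add_left_eq_self]

end AffineChangeOfVariables

def dilationLinear (n : ℕ) (k R : ℝ) : Pt n →ₗ[ℝ] Pt n :=
  (R • LinearMap.id).prodMap (R ^ (2 * k) • LinearMap.id)

theorem det_dilationLinear (n : ℕ) (k : ℝ) {R : ℝ} (hR : 0 < R) :
    LinearMap.det (dilationLinear n k R) = R ^ (2 * n + 2 * k : ℝ) := by
  rw [dilationLinear, LinearMap.det_prodMap, LinearMap.det_smul, LinearMap.det_smul,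
    LinearMap.det_id, LinearMap.det_id, rpow_add hR, Module.finrank_self,
    Module.finrank_fintype_fun_eq_card, Fintype.card_sum, Fintype.card_fin, ← two_mul]
  norm_cast
  ring

@[simp]
theorem dilationLinear_apply (n : ℕ) (k R : ℝ) (x : Pt n) :
    dilationLinear n k R x = (R • x.1, R ^ (2 * k) * x.2) := rfl

def dilation (n : ℕ) (a : Fin n ⊕ Fin n → ℝ) (s k R : ℝ) (x : Pt n) : Pt n :=
  (a, s) + dilationLinear n k R (x - (a, s))

theorem dilation_fst_sub (n : ℕ) (a : Fin n ⊕ Fin n → ℝ) (s k R : ℝ) (x : Pt n)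
    (l : Fin n ⊕ Fin n) : (dilation n a s k R x).1 l - a l = R * (x.1 l - a l) := by
  simp [dilation]

theorem dilation_snd_sub (n : ℕ) (a : Fin n ⊕ Fin n → ℝ) (s k R : ℝ) (x : Pt n) :
    (dilation n a s k R x).2 - s = R ^ (2 * k) * (x.2 - s) := by
  simp [dilation]

theorem Sg_nonneg (n : ℕ) (a : Fin n ⊕ Fin n → ℝ) (x : Pt n) : 0 ≤ Sg n a x :=
  Finset.sum_nonneg fun _ _ => sq_nonneg _

theorem Sg_dilation (n : ℕ) (a : Fin n ⊕ Fin n → ℝ) (s k R : ℝ) (x : Pt n) :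
    Sg n a (dilation n a s k R x) = R ^ 2 * Sg n a x := by
  simp only [Sg, dilation_fst_sub, Finset.mul_sum, mul_pow]

theorem hfun_dilation (n : ℕ) (a : Fin n ⊕ Fin n → ℝ) (s c k : ℝ) {R : ℝ} (hR : 0 < R)
    (x : Pt n) : hfun n k c a s (dilation n a s k R x) = R ^ (4 * k) * hfun n k c a s x := by
  have hSg : (R ^ 2 * Sg n a x) ^ (2 * k) = R ^ (4 * k) * Sg n a x ^ (2 * k) := by
    rw [mul_rpow (by positivity) (Sg_nonneg n a x), ← rpow_natCast, ← rpow_mul hR.le]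
    norm_num [← mul_assoc]
  have hsq : (R ^ (2 * k)) ^ 2 = R ^ (4 * k) := by
    rw [← rpow_natCast, ← rpow_mul hR.le]
    ring_nf
  simp only [hfun, Sg_dilation, dilation_snd_sub, hSg, mul_pow, hsq]
  ring

theorem hfun_nonneg (n : ℕ) (a : Fin n ⊕ Fin n → ℝ) (s c k : ℝ) (x : Pt n) :
    0 ≤ hfun n k c a s x :=
  add_nonneg (mul_nonneg (sq_nonneg _) (rpow_nonneg (Sg_nonneg n a x) _)) (sq_nonneg _)

theorem psi_dilation (n : ℕ) (a : Fin n ⊕ Fin n → ℝ) (s c : ℝ) {k R : ℝ} (hk : 0 < k)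
    (hR : 0 < R) (x : Pt n) : psi n k c a s (dilation n a s k R x) = R * psi n k c a s x := by
  rw [psi, psi, hfun_dilation n a s c k hR, mul_rpow (by positivity) (hfun_nonneg n a s c k x),
    ← rpow_mul hR.le, mul_one_div_cancel (by positivity), rpow_one]

theorem continuous_psi (n : ℕ) (a : Fin n ⊕ Fin n → ℝ) (s c : ℝ) {k : ℝ} (hk : 0 < k) :
    Continuous (psi n k c a s) := by
  unfold psi hfun Sg
  fun_prop (disch := positivity)

theorem X_dilation_of_homogeneous (n : ℕ) (a : Fin n ⊕ Fin n → ℝ) (s c k : ℝ) {R : ℝ}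
    (hR : 0 < R) {u : Pt n → ℝ} (hu : ∀ x, u (dilation n a s k R x) = R * u x)
    (l : Fin n ⊕ Fin n) (x : Pt n) :
    X n k c a l u (dilation n a s k R x) = X n k c a l u x := by
  have hdet : LinearMap.det (dilationLinear n k R) ≠ 0 := by
    rw [det_dilationLinear n k hR]; positivity
  have hD : ∀ v, fderiv ℝ u (dilation n a s k R x) (dilationLinear n k R v)
      = R * fderiv ℝ u x v := by
    intro v
    have h := fderiv_comp_affine_linearMap hdet (a, s) u x
    rw [show (fun y => u ((a, s) + dilationLinear n k R (y - (a, s)))) = R • u from funext hu,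
      fderiv_const_smul_field] at h
    exact (DFunLike.congr_fun h v).symm
  have hpdx : ∀ m, pdx n m u (dilation n a s k R x) = pdx n m u x := by
    intro m
    have h := hD (Pi.single m 1, 0)
    rw [show dilationLinear n k R (Pi.single m 1, 0) = R • (Pi.single m 1, 0) by simp,
      map_smul, smul_eq_mul] at h
    exact mul_left_cancel₀ hR.ne' h
  have hpdt : R * R ^ (2 * k - 2) * pdt n u (dilation n a s k R x) = pdt n u x := by
    have h := hD (0, 1)
    rw [show dilationLinear n k R (0, 1) = R ^ (2 * k) • (0, 1) by simp,
      map_smul, smul_eq_mul] at h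
    rw [pdt, pdt, rpow_sub hR, rpow_two]
    field_simp
    linear_combination h
  have hSg : Sg n a (dilation n a s k R x) ^ (k - 1) = R ^ (2 * k - 2) * Sg n a x ^ (k - 1) := by
    rw [Sg_dilation, mul_rpow (by positivity) (Sg_nonneg n a x), ← rpow_natCast,
      ← rpow_mul hR.le]
    ring_nf
  cases l with
  | inl i =>
    simp only [X, hpdx, dilation_fst_sub, hSg]
    linear_combination
      (2 * k * c * (x.1 (Sum.inr i) - a (Sum.inr i)) * Sg n a x ^ (k - 1)) * hpdt
  | inr j =>
    simp only [X, hpdx, dilation_fst_sub, hSg]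
    linear_combination
      (-(2 * k * c * (x.1 (Sum.inl j) - a (Sum.inl j)) * Sg n a x ^ (k - 1))) * hpdt

theorem hnorm_dilation_of_homogeneous (n : ℕ) (a : Fin n ⊕ Fin n → ℝ) (s c k : ℝ) {R : ℝ}
    (hR : 0 < R) {u : Pt n → ℝ} (hu : ∀ x, u (dilation n a s k R x) = R * u x) (x : Pt n) :
    hnorm n k c a u (dilation n a s k R x) = hnorm n k c a u x := by
  simp only [hnorm, X_dilation_of_homogeneous n a s c k hR hu]

-- Instance search does not unfold `volume` on a product to `volume.prod volume`.
instance (n : ℕ) : (volume : Measure (Pt n)).IsAddHaarMeasure :=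
  Measure.prod.instIsAddHaarMeasure _ _

theorem integral_comp_dilation (n : ℕ) (a : Fin n ⊕ Fin n → ℝ) (s k : ℝ) {R : ℝ} (hR : 0 < R)
    (g : Pt n → ℝ) :
    ∫ x, g (dilation n a s k R x) = (R ^ (2 * n + 2 * k : ℝ))⁻¹ * ∫ x, g x := by
  have hdet : LinearMap.det (dilationLinear n k R) ≠ 0 := by
    rw [det_dilationLinear n k hR]; positivity
  have h := integral_comp_affine_linearMap volume hdet (a, s) g
  rwa [det_dilationLinear n k hR, abs_of_pos (by positivity), smul_eq_mul] at h

theorem setIntegral_psi_lt_of_dilation_invariant (n : ℕ) (a : Fin n ⊕ Fin n → ℝ) (s c : ℝ)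
    {k R : ℝ} (hk : 0 < k) (hR : 0 < R) {g : Pt n → ℝ}
    (hg : ∀ x, g (dilation n a s k R x) = g x) :
    ∫ x in {x | psi n k c a s x < R}, g x
      = (∫ x in {x | psi n k c a s x < 1}, g x) * R ^ (2 * n + 2 * k : ℝ) := by
  have hball : ∀ r, MeasurableSet {x | psi n k c a s x < r} := fun r =>
    (isOpen_lt (continuous_psi n a s c hk) continuous_const).measurableSet
  have hrescale : ∫ x, {x | psi n k c a s x < 1}.indicator g x
      = (R ^ (2 * n + 2 * k : ℝ))⁻¹ * ∫ x, {x | psi n k c a s x < R}.indicator g x := by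
    rw [← integral_comp_dilation n a s k hR]
    congr 1 with x
    simp only [Set.indicator_apply, Set.mem_ofPred_eq, psi_dilation n a s c hk hR,
      mul_lt_iff_lt_one_right hR, hg]
  rw [← integral_indicator (hball R), ← integral_indicator (hball 1), hrescale,
    mul_comm, ← mul_assoc, mul_inv_cancel₀ (by positivity), one_mul]

theorem stmt5_general (n : ℕ) (a : Fin n ⊕ Fin n → ℝ) (s : ℝ)
    (c k : ℝ) (hk : 0 < k)
    (p Q : ℝ) (hQ : Q = 2 * n + 2 * k) (R : ℝ) (hR : 0 < R) :
    (∫ x in {x : Pt n | psi n k c a s x < R}, hnorm n k c a (psi n k c a s) x ^ p)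
      = (∫ x in {x : Pt n | psi n k c a s x < 1}, hnorm n k c a (psi n k c a s) x ^ p)
          * R ^ Q := by
  subst hQ
  refine setIntegral_psi_lt_of_dilation_invariant n a s c hk hR fun x => ?_
  rw [hnorm_dilation_of_homogeneous n a s c k hR (psi_dilation n a s c hk hR)]

theorem stmt5 (n : ℕ) (hn : 1 ≤ n) (a : Fin n ⊕ Fin n → ℝ) (s : ℝ)
    (c k : ℝ) (hc : c ≠ 0) (hk : 0 < k)
    (p Q : ℝ) (hp : 1 < p) (hQ : Q = 2 * n + 2 * k) (R : ℝ) (hR : 0 < R) :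
    (∫ x in {x : Pt n | psi n k c a s x < R}, hnorm n k c a (psi n k c a s) x ^ p)
      = (∫ x in {x : Pt n | psi n k c a s x < 1}, hnorm n k c a (psi n k c a s) x ^ p)
          * R ^ Q :=
  stmt5_general n a s c k hk p Q hQ R hR
end
end

section
/- At every point x = (x₁,…,x_{2n},t) ∈ ℝ^{2n+1} with Σ(x) ≠ 0, the squared norm of the horizontal gradient of ψ satisfies ‖∇₀ψ‖² = c² Σ^{2k−1} h^{(1−2k)/(2k)}. -/
open MeasureTheory Real Filter

noncomputable section

/-!
Since `ψ = h^{1/(4k)}`, the chain rule gives `X_l ψ = (4k)⁻¹ h^{1/(4k) - 1} X_l h`, and a direct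
computation gives `X_l h = 4kcΣ^{k-1} (cΣ^k y_l + (t - s) (J y)_l)`, where `y = x - a` is the
horizontal displacement and `J (y, y') = (y', -y)` is the standard symplectic rotation. As `J` is
orthogonal and skew, `∑_l (A y_l + B (J y)_l)² = (A² + B²) |y|²`; with `A = cΣ^k`, `B = t - s`
this is `h Σ`, so `∑_l (X_l h)² = 16 k² c² Σ^{2k-1} h`, and the powers of `h` combine to the
claimed exponent.
-/

open Finset

lemma rpow_sq_mul_self {b : ℝ} (hb : 0 < b) (e : ℝ) : (b ^ e) ^ 2 * b = b ^ (2 * e + 1) := by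
  rw [rpow_add_one hb.ne', two_mul, rpow_add hb, sq]

section SymplecticRotation

variable {ι : Type*} [Fintype ι]

def symplecticJ (y : ι ⊕ ι → ℝ) : ι ⊕ ι → ℝ
  | Sum.inl i => y (Sum.inr i)
  | Sum.inr j => -y (Sum.inl j)

lemma sum_mul_symplecticJ_self (y : ι ⊕ ι → ℝ) : ∑ l, y l * symplecticJ y l = 0 := by
  simp only [Fintype.sum_sum_type, symplecticJ, ← sum_add_distrib]
  exact sum_eq_zero fun i _ => by ring

lemma sum_symplecticJ_sq (y : ι ⊕ ι → ℝ) : ∑ l, symplecticJ y l ^ 2 = ∑ l, y l ^ 2 := by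
  simp only [Fintype.sum_sum_type, symplecticJ, neg_sq]
  exact add_comm _ _

lemma sum_sq_add_mul_symplecticJ (A B : ℝ) (y : ι ⊕ ι → ℝ) :
    ∑ l, (A * y l + B * symplecticJ y l) ^ 2 = (A ^ 2 + B ^ 2) * ∑ l, y l ^ 2 := by
  have hexpand : ∀ l, (A * y l + B * symplecticJ y l) ^ 2
      = A ^ 2 * y l ^ 2 + 2 * A * B * (y l * symplecticJ y l) + B ^ 2 * symplecticJ y l ^ 2 :=
    fun l => by ring
  simp only [hexpand, sum_add_distrib, ← mul_sum, sum_mul_symplecticJ_self, sum_symplecticJ_sq]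
  ring

end SymplecticRotation

section HorizontalFields

variable {n : ℕ} {k c s : ℝ} {a : Fin n ⊕ Fin n → ℝ} {x : Pt n}

lemma X_eq_pdx_add_pdt (l : Fin n ⊕ Fin n) (u : Pt n → ℝ) (x : Pt n) :
    X n k c a l u x = pdx n l u x
      + 2 * k * c * symplecticJ (x.1 - a) l * Sg n a x ^ (k - 1) * pdt n u x := by
  rcases l with i | j
  · simp only [X, symplecticJ, Pi.sub_apply]
  · simp only [X, symplecticJ, Pi.sub_apply]; ring

lemma X_comp {g : ℝ → ℝ} {g' : ℝ} {u : Pt n → ℝ} (hu : DifferentiableAt ℝ u x)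
    (hg : HasDerivAt g g' (u x)) (l : Fin n ⊕ Fin n) :
    X n k c a l (g ∘ u) x = g' * X n k c a l u x := by
  have hfd : fderiv ℝ (g ∘ u) x = g' • fderiv ℝ u x :=
    (hg.comp_hasFDerivAt x hu.hasFDerivAt).fderiv
  simp only [X_eq_pdx_add_pdt, pdx, pdt, hfd, smul_apply, smul_eq_mul]
  ring

lemma Sg_pos (hx : Sg n a x ≠ 0) : 0 < Sg n a x :=
  (sum_nonneg fun _ _ => sq_nonneg _).lt_of_ne' hx

lemma hfun_pos (hc : c ≠ 0) (hx : Sg n a x ≠ 0) : 0 < hfun n k c a s x := by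
  have := rpow_pos_of_pos (Sg_pos hx) (2 * k)
  unfold hfun
  positivity

def horizCoord (n : ℕ) (l : Fin n ⊕ Fin n) : Pt n →L[ℝ] ℝ :=
  (ContinuousLinearMap.proj l).comp (ContinuousLinearMap.fst ℝ (Fin n ⊕ Fin n → ℝ) ℝ)

@[simp]
lemma horizCoord_apply (l : Fin n ⊕ Fin n) (y : Pt n) : horizCoord n l y = y.1 l := rfl

lemma hasFDerivAt_Sg (a : Fin n ⊕ Fin n → ℝ) (x : Pt n) :
    HasFDerivAt (Sg n a) (∑ l, (2 * (x.1 l - a l)) • horizCoord n l) x := by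
  refine HasFDerivAt.fun_sum fun l _ => ?_
  simpa using ((horizCoord n l).hasFDerivAt.sub_const (a l)).pow 2

lemma hasFDerivAt_hfun (hx : Sg n a x ≠ 0) :
    HasFDerivAt (hfun n k c a s)
      (c ^ 2 • (2 * k * Sg n a x ^ (2 * k - 1)) • (∑ l, (2 * (x.1 l - a l)) • horizCoord n l)
        + (2 * (x.2 - s)) • ContinuousLinearMap.snd ℝ (Fin n ⊕ Fin n → ℝ) ℝ) x := by
  have hvert : HasFDerivAt (fun y : Pt n => (y.2 - s) ^ 2)
      ((2 * (x.2 - s)) • ContinuousLinearMap.snd ℝ (Fin n ⊕ Fin n → ℝ) ℝ) x := by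
    simpa using ((ContinuousLinearMap.snd ℝ (Fin n ⊕ Fin n → ℝ) ℝ).hasFDerivAt.sub_const s).pow 2
  exact (((hasFDerivAt_Sg a x).rpow_const (p := 2 * k) (Or.inl hx)).const_mul (c ^ 2)).add hvert

lemma pdx_hfun (hx : Sg n a x ≠ 0) (l : Fin n ⊕ Fin n) :
    pdx n l (hfun n k c a s) x = 4 * k * c ^ 2 * Sg n a x ^ (2 * k - 1) * (x.1 l - a l) := by
  simp only [pdx, (hasFDerivAt_hfun hx).fderiv, add_apply, smul_apply, _root_.sum_apply,
    horizCoord_apply, Pi.single_apply, smul_eq_mul, mul_ite, mul_one, mul_zero,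
    sum_ite_eq', mem_univ, ↓reduceIte, ContinuousLinearMap.coe_snd', add_zero]
  ring

lemma pdt_hfun (hx : Sg n a x ≠ 0) : pdt n (hfun n k c a s) x = 2 * (x.2 - s) := by
  simp [pdt, (hasFDerivAt_hfun hx).fderiv]

lemma X_hfun (hx : Sg n a x ≠ 0) (l : Fin n ⊕ Fin n) :
    X n k c a l (hfun n k c a s) x = 4 * k * c * Sg n a x ^ (k - 1)
      * (c * Sg n a x ^ k * (x.1 - a) l + (x.2 - s) * symplecticJ (x.1 - a) l) := by
  have hsplit : Sg n a x ^ (2 * k - 1) = Sg n a x ^ (k - 1) * Sg n a x ^ k := by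
    rw [← rpow_add (Sg_pos hx)]; ring_nf
  rw [X_eq_pdx_add_pdt, pdx_hfun hx, pdt_hfun hx, hsplit, Pi.sub_apply]
  ring

lemma sum_sq_X_hfun (hx : Sg n a x ≠ 0) :
    ∑ l, X n k c a l (hfun n k c a s) x ^ 2
      = (4 * k * c * Sg n a x ^ (k - 1)) ^ 2 * hfun n k c a s x * Sg n a x := by
  have hsq : (Sg n a x ^ k) ^ 2 = Sg n a x ^ (2 * k) := by
    rw [two_mul, rpow_add (Sg_pos hx), sq]
  simp only [X_hfun hx, mul_pow, ← mul_sum, sum_sq_add_mul_symplecticJ]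
  rw [hsq]
  simp only [hfun, Sg, Pi.sub_apply]
  ring

end HorizontalFields

theorem stmt12_general (n : ℕ) (a : Fin n ⊕ Fin n → ℝ) (s : ℝ)
    (c k : ℝ) (hc : c ≠ 0) (hk : 0 < k)
    (x : Pt n) (hx : Sg n a x ≠ 0) :
    ∑ l : Fin n ⊕ Fin n, (X n k c a l (psi n k c a s) x) ^ 2
      = c ^ 2 * Sg n a x ^ (2 * k - 1) * hfun n k c a s x ^ ((1 - 2 * k) / (2 * k)) := by
  have hh : 0 < hfun n k c a s x := hfun_pos hc hx
  have hX : ∀ l, X n k c a l (psi n k c a s) x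
      = 1 / (4 * k) * hfun n k c a s x ^ (1 / (4 * k) - 1) * X n k c a l (hfun n k c a s) x :=
    X_comp (hasFDerivAt_hfun hx).differentiableAt (hasDerivAt_rpow_const (Or.inl hh.ne'))
  have hexpS : 2 * (k - 1) + 1 = 2 * k - 1 := by ring
  have hexph : 2 * (1 / (4 * k) - 1) + 1 = (1 - 2 * k) / (2 * k) := by field_simp; ring
  simp only [hX, mul_pow, ← mul_sum, sum_sq_X_hfun hx]
  calc _ = c ^ 2 * ((Sg n a x ^ (k - 1)) ^ 2 * Sg n a x)
        * ((hfun n k c a s x ^ (1 / (4 * k) - 1)) ^ 2 * hfun n k c a s x) := by field_simp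
    _ = _ := by rw [rpow_sq_mul_self (Sg_pos hx), rpow_sq_mul_self hh, hexpS, hexph]

theorem stmt12 (n : ℕ) (hn : 1 ≤ n) (a : Fin n ⊕ Fin n → ℝ) (s : ℝ)
    (c k : ℝ) (hc : c ≠ 0) (hk : 0 < k)
    (x : Pt n) (hx : Sg n a x ≠ 0) :
    ∑ l : Fin n ⊕ Fin n, (X n k c a l (psi n k c a s) x) ^ 2
      = c ^ 2 * Sg n a x ^ (2 * k - 1) * hfun n k c a s x ^ ((1 - 2 * k) / (2 * k)) :=
  stmt12_general n a s c k hc hk x hx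
end
end
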